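/- arXiv:2210.15815 — 4 statements merged into one kernel-verified Lean document; each statement's English description precedes it below -/
import Mathlib

section
/- Let A, B, C be matrices and suppose transfer matrices Φ_xw^SF, Φ_uw^SF satisfy (zI − A)Φ_xw^SF − B Φ_uw^SF = I, and Φ_ew^KF, Φ_ev^KF satisfy Φ_ew^KF(zI − A) − Φ_ev^KF C = I. Define Φ_xx = Φ_xw^SF + Φ_ew^KF − Φ_xw^SF(zI − A)Φ_ew^KF, Φ_ux = Φ_uw^SF − Φ_uw^SF(zI − A)Φ_ew^KF, Φ_xy = Φ_ev^KF − Φ_xw^SF(zI − A)Φ_ev^KF, Φ_uy = −Φ_uw^SF(zI − A)Φ_ev^KF. Then the block identity [zI − A, −B] · [[Φ_xx, Φ_xy],[Φ_ux, Φ_uy]] = [I, 0] holds. -/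
/-- Separation-principle construction: the constructed output-feedback closed-loop maps
satisfy the left feasibility identity `[zI - A, -B] · [[Φxx, Φxy],[Φux, Φuy]] = [I, 0]`,
stated blockwise.  Here `zA` denotes the matrix `zI - A` over a (commutative) ring of
transfer functions / formal series. -/
theorem stmt0 {R : Type*} [CommRing R] {n m p : ℕ}
    (zA : Matrix (Fin n) (Fin n) R) (B : Matrix (Fin n) (Fin m) R)
    (C : Matrix (Fin p) (Fin n) R)
    (Φxw Φew : Matrix (Fin n) (Fin n) R) (Φuw : Matrix (Fin m) (Fin n) R)
    (Φev : Matrix (Fin n) (Fin p) R)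
    (hSF : zA * Φxw - B * Φuw = 1)
    (hKF : Φew * zA - Φev * C = 1)
    (Φxx : Matrix (Fin n) (Fin n) R) (Φux : Matrix (Fin m) (Fin n) R)
    (Φxy : Matrix (Fin n) (Fin p) R) (Φuy : Matrix (Fin m) (Fin p) R)
    (hxx : Φxx = Φxw + Φew - Φxw * zA * Φew)
    (hux : Φux = Φuw - Φuw * zA * Φew)
    (hxy : Φxy = Φev - Φxw * zA * Φev)
    (huy : Φuy = -(Φuw * zA * Φev)) :
    zA * Φxx - B * Φux = 1 ∧ zA * Φxy - B * Φuy = 0 := by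
  subst hxx hux hxy huy
  constructor
  · have h1 : zA * (Φxw + Φew - Φxw * zA * Φew) - B * (Φuw - Φuw * zA * Φew)
        = (zA * Φxw - B * Φuw) * (1 - zA * Φew) + zA * Φew := by
      simp [Matrix.mul_add, Matrix.mul_sub, Matrix.sub_mul, Matrix.mul_one,
        Matrix.mul_assoc]
      abel
    rw [h1, hSF]; simp
  · have h2 : zA * (Φev - Φxw * zA * Φev) - B * (-(Φuw * zA * Φev))
        = (1 - (zA * Φxw - B * Φuw)) * (zA * Φev) := by
      simp [Matrix.mul_sub, Matrix.sub_mul, Matrix.one_mul, Matrix.mul_assoc]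
      abel
    rw [h2, hSF]; simp
end

section
/- Under the same hypotheses as the separation-principle construction — (zI − A)Φ_xw^SF − B Φ_uw^SF = I and Φ_ew^KF(zI − A) − Φ_ev^KF C = I — the constructed maps Φ_xx, Φ_ux, Φ_xy, Φ_uy (defined as Φ_xx = Φ_xw^SF + Φ_ew^KF − Φ_xw^SF(zI − A)Φ_ew^KF, Φ_ux = Φ_uw^SF − Φ_uw^SF(zI − A)Φ_ew^KF, Φ_xy = Φ_ev^KF − Φ_xw^SF(zI − A)Φ_ev^KF, Φ_uy = −Φ_uw^SF(zI − A)Φ_ev^KF) satisfy the second feasibility equation: [[Φ_xx, Φ_xy],[Φ_ux, Φ_uy]] · [zI − A; −C] = [I; 0]. -/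
/-- Separation-principle construction: the constructed output-feedback closed-loop maps
satisfy the right feasibility identity `[[Φxx, Φxy],[Φux, Φuy]] · [zI - A; -C] = [I; 0]`,
stated blockwise.  `zA` denotes the matrix `zI - A`. -/
theorem stmt1 {R : Type*} [CommRing R] {n m p : ℕ}
    (zA : Matrix (Fin n) (Fin n) R) (B : Matrix (Fin n) (Fin m) R)
    (C : Matrix (Fin p) (Fin n) R)
    (Φxw Φew : Matrix (Fin n) (Fin n) R) (Φuw : Matrix (Fin m) (Fin n) R)
    (Φev : Matrix (Fin n) (Fin p) R)
    (hSF : zA * Φxw - B * Φuw = 1)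
    (hKF : Φew * zA - Φev * C = 1)
    (Φxx : Matrix (Fin n) (Fin n) R) (Φux : Matrix (Fin m) (Fin n) R)
    (Φxy : Matrix (Fin n) (Fin p) R) (Φuy : Matrix (Fin m) (Fin p) R)
    (hxx : Φxx = Φxw + Φew - Φxw * zA * Φew)
    (hux : Φux = Φuw - Φuw * zA * Φew)
    (hxy : Φxy = Φev - Φxw * zA * Φev)
    (huy : Φuy = -(Φuw * zA * Φev)) :
    Φxx * zA - Φxy * C = 1 ∧ Φux * zA - Φuy * C = 0 := by
  have h : Φew * zA = 1 + Φev * C := by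
    rw [← hKF]; abel
  subst hxx hux hxy huy
  constructor
  · simp only [Matrix.sub_mul, Matrix.add_mul, Matrix.neg_mul, Matrix.mul_assoc,
      Matrix.mul_sub, Matrix.mul_add, Matrix.mul_one, h]
    abel
  · simp only [Matrix.sub_mul, Matrix.add_mul, Matrix.neg_mul, Matrix.mul_assoc,
      Matrix.mul_sub, Matrix.mul_add, Matrix.mul_one, h]
    abel
end

section
/- Suppose (zI − A)Φ_xw^SF = I + B Φ_uw^SF and Φ_ew^KF(zI − A) = I + Φ_ev^KF C. Then the four output-feedback maps Φ_xx, Φ_xy, Φ_ux, Φ_uy constructed from Φ_xw^SF, Φ_uw^SF, Φ_ew^KF, Φ_ev^KF by the separation-principle construction (with the definitions in Theorem 4) satisfy (zI − A)Φ_xx − B Φ_ux = I and (zI − A)Φ_xy − B Φ_uy = 0. -/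
/-- With the separation-principle definitions and the two feasibility hypotheses, the
left feasibility components hold: `(zI − A) Φxx − B Φux = I` and
`(zI − A) Φxy − B Φuy = 0`.  `zA` denotes the matrix `zI − A`. -/
theorem stmt13 {R : Type*} [CommRing R] {n m p : ℕ}
    (zA : Matrix (Fin n) (Fin n) R) (B : Matrix (Fin n) (Fin m) R)
    (C : Matrix (Fin p) (Fin n) R)
    (Φxw Φew : Matrix (Fin n) (Fin n) R) (Φuw : Matrix (Fin m) (Fin n) R)
    (Φev : Matrix (Fin n) (Fin p) R)
    (hSF : zA * Φxw - B * Φuw = 1)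
    (hKF : Φew * zA - Φev * C = 1) :
    zA * (Φxw + Φew - Φxw * zA * Φew) - B * (Φuw - Φuw * zA * Φew) = 1 ∧
    zA * (Φev - Φxw * zA * Φev) - B * (-(Φuw * zA * Φev)) = 0 := by
  have h : zA * Φxw = 1 + B * Φuw := sub_eq_iff_eq_add.mp hSF
  constructor
  · simp only [Matrix.mul_add, Matrix.mul_sub, Matrix.sub_mul, Matrix.add_mul,
      ← Matrix.mul_assoc, h, Matrix.one_mul]
    abel
  · simp only [Matrix.mul_sub, Matrix.mul_neg, Matrix.sub_mul, Matrix.add_mul,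
      ← Matrix.mul_assoc, h, Matrix.one_mul]
    abel
end

section
/- With the separation-principle definitions and hypotheses, the right feasibility components hold: Φ_xx(zI − A) − Φ_xy C = I and Φ_ux(zI − A) − Φ_uy C = 0. -/
/-- With the separation-principle definitions and the two feasibility hypotheses, the
right feasibility components hold: `Φxx (zI − A) − Φxy C = I` and
`Φux (zI − A) − Φuy C = 0`.  `zA` denotes the matrix `zI − A`. -/
theorem stmt14 {R : Type*} [CommRing R] {n m p : ℕ}
    (zA : Matrix (Fin n) (Fin n) R) (B : Matrix (Fin n) (Fin m) R)
    (C : Matrix (Fin p) (Fin n) R)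
    (Φxw Φew : Matrix (Fin n) (Fin n) R) (Φuw : Matrix (Fin m) (Fin n) R)
    (Φev : Matrix (Fin n) (Fin p) R)
    (hSF : zA * Φxw - B * Φuw = 1)
    (hKF : Φew * zA - Φev * C = 1) :
    (Φxw + Φew - Φxw * zA * Φew) * zA - (Φev - Φxw * zA * Φev) * C = 1 ∧
    (Φuw - Φuw * zA * Φew) * zA - (-(Φuw * zA * Φev)) * C = 0 := by
  constructor
  · have : (Φxw + Φew - Φxw * zA * Φew) * zA - (Φev - Φxw * zA * Φev) * C
        = Φxw * zA + (Φew * zA - Φev * C) - Φxw * zA * (Φew * zA - Φev * C) := by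
      simp only [Matrix.mul_sub, Matrix.sub_mul, Matrix.add_mul, Matrix.neg_mul,
        Matrix.mul_assoc]
      abel
    rw [this, hKF]; simp
  · have : (Φuw - Φuw * zA * Φew) * zA - (-(Φuw * zA * Φev)) * C
        = Φuw * zA - Φuw * zA * (Φew * zA - Φev * C) := by
      simp only [Matrix.mul_sub, Matrix.sub_mul, Matrix.add_mul, Matrix.neg_mul,
        Matrix.mul_assoc]
      abel
    rw [this, hKF]; simp
end
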